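/- Let N ≥ 2 be an integer, set x_i = (i−1)/(N−1) for i = 1, …, N and h = 1/(2(N−1)), let φ_{x_i}(x) = (1/h)·ReLU(x − x_i + h) − (2/h)·ReLU(x − x_i) + (1/h)·ReLU(x − x_i − h), let b ∈ [0, 1), and define f₂(x) = ReLU((Σ_{i : x_i ≥ 1/2} φ_{x_i}(x)) − b)/(1 − b) − ReLU((Σ_{i : x_i < 1/2} φ_{x_i}(x)) − b)/(1 − b). Then the Lebesgue measure of the set {x ∈ [0, 1] : f₂(x) ≠ 0} equals 1 − b. -/
import Mathlib


noncomputable def relu (x : ℝ) : ℝ := max x 0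

/-- The one-dimensional ReLU hat function of half-width `h` centered at `t`. -/
noncomputable def hat (h t x : ℝ) : ℝ :=
  (1 / h) * relu (x - t + h) - (2 / h) * relu (x - t) + (1 / h) * relu (x - t - h)

lemma hat_eq {h : ℝ} (t s : ℝ) (hh : 0 < h) :
    hat h t s = max (1 - |s - t| / h) 0 := by
  have hne := hh.ne'
  unfold hat relu
  rcases le_or_gt (s - t) (-h) with h1 | h1
  · rw [abs_of_nonpos (by linarith)]
    rw [max_eq_right (by linarith : s - t + h ≤ 0),
      max_eq_right (by linarith : s - t ≤ 0),
      max_eq_right (by linarith : s - t - h ≤ 0),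
      max_eq_right (by rw [sub_nonpos, le_div_iff₀ hh]; linarith)]
    ring
  · rcases le_or_gt (s - t) 0 with h2 | h2
    · rw [abs_of_nonpos h2,
        max_eq_left (by linarith : 0 ≤ s - t + h),
        max_eq_right h2,
        max_eq_right (by linarith : s - t - h ≤ 0),
        max_eq_left (by rw [sub_nonneg, div_le_iff₀ hh]; linarith)]
      field_simp; ring
    · rcases le_or_gt (s - t) h with h3 | h3
      · rw [abs_of_nonneg h2.le,
          max_eq_left (by linarith), max_eq_left h2.le,
          max_eq_right (by linarith),
          max_eq_left (by rw [sub_nonneg, div_le_iff₀ hh]; linarith)]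
        field_simp; ring
      · rw [abs_of_nonneg h2.le,
          max_eq_left (by linarith), max_eq_left h2.le,
          max_eq_left (by linarith),
          max_eq_right (by rw [sub_nonpos, le_div_iff₀ hh]; linarith)]
        field_simp; ring

lemma hat_nonneg {h : ℝ} (t s : ℝ) (hh : 0 < h) : 0 ≤ hat h t s := by
  rw [hat_eq t s hh]; exact le_max_right _ _

lemma hat_zero {h : ℝ} (t s : ℝ) (hh : 0 < h) (hd : h ≤ |s - t|) : hat h t s = 0 := by
  rw [hat_eq t s hh, max_eq_right]
  rw [sub_nonpos, le_div_iff₀ hh, one_mul]; exact hd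

lemma hat_gt_iff {h b : ℝ} (t s : ℝ) (hh : 0 < h) (hb : 0 ≤ b) :
    b < hat h t s ↔ |s - t| < (1 - b) * h := by
  rw [hat_eq t s hh, lt_max_iff]
  constructor
  · rintro (h1 | h1)
    · have h2 : |s - t| / h < 1 - b := by linarith
      have := (div_lt_iff₀ hh).mp h2
      linarith
    · linarith
  · intro h1
    left
    have : |s - t| / h < 1 - b := (div_lt_iff₀ hh).mpr (by linarith)
    linarith

open Set MeasureTheory in
/-- the measure of the support of the 1-D classification network
on `[0,1]` equals `1 - b`. -/
theorem stmt_4 (N : ℕ) (hN : 2 ≤ N)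
    (x : ℕ → ℝ) (hx : ∀ i, x i = ((i : ℝ) - 1) / ((N : ℝ) - 1))
    (h : ℝ) (hh : h = 1 / (2 * ((N : ℝ) - 1)))
    (b : ℝ) (hb : 0 ≤ b ∧ b < 1)
    (f₂ : ℝ → ℝ)
    (hf : ∀ t, f₂ t =
      relu ((∑ i ∈ (Finset.Icc 1 N).filter (fun i => (1 : ℝ) / 2 ≤ x i),
        hat h (x i) t) - b) / (1 - b)
      - relu ((∑ i ∈ (Finset.Icc 1 N).filter (fun i => x i < (1 : ℝ) / 2),
        hat h (x i) t) - b) / (1 - b)) :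
    MeasureTheory.volume {t : ℝ | t ∈ Set.Icc (0 : ℝ) 1 ∧ f₂ t ≠ 0}
      = ENNReal.ofReal (1 - b) := by
  obtain ⟨hb0, hb1⟩ := hb
  have hN2 : (2:ℝ) ≤ (N:ℝ) := by exact_mod_cast hN
  have hNpos : (0:ℝ) < (N:ℝ) - 1 := by linarith
  have hhpos : 0 < h := by rw [hh]; positivity
  have h2h1 : 2 * h * ((N:ℝ) - 1) = 1 := by rw [hh]; field_simp
  set r : ℝ := (1 - b) * h with hr
  have hr0 : 0 < r := mul_pos (by linarith) hhpos
  have hrh : r ≤ h := by nlinarith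
  have hh12 : h ≤ 1/2 := by
    rw [hh, div_le_div_iff₀ (by positivity) (by norm_num)]
    linarith
  have hr1 : r ≤ 1/2 := hrh.trans hh12
  have hdist : ∀ i j : ℕ, i ≠ j → 2 * h ≤ |x i - x j| := by
    intro i j hij
    have key : (1:ℝ) ≤ |(i:ℝ) - (j:ℝ)| := by
      rcases hij.lt_or_gt with hlt | hlt
      · rw [abs_sub_comm, abs_of_nonneg (sub_nonneg.2 (by exact_mod_cast hlt.le))]
        have : (i:ℝ) + 1 ≤ (j:ℝ) := by exact_mod_cast hlt
        linarith
      · rw [abs_of_nonneg (sub_nonneg.2 (by exact_mod_cast hlt.le))]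
        have : (j:ℝ) + 1 ≤ (i:ℝ) := by exact_mod_cast hlt
        linarith
    have e : x i - x j = ((i:ℝ) - (j:ℝ)) / ((N:ℝ) - 1) := by
      rw [hx, hx, div_sub_div_same]; ring_nf
    rw [e, abs_div, abs_of_pos hNpos, le_div_iff₀ hNpos]
    nlinarith [key]
  -- membership bounds for grid points
  have hx_mem : ∀ i ∈ Finset.Icc 1 N, 0 ≤ x i ∧ x i ≤ 1 := by
    intro i hi
    rw [Finset.mem_Icc] at hi
    have h1 : (1:ℝ) ≤ (i:ℝ) := by exact_mod_cast hi.1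
    have h2 : (i:ℝ) ≤ (N:ℝ) := by exact_mod_cast hi.2
    rw [hx]
    constructor
    · exact div_nonneg (by linarith) hNpos.le
    · rw [div_le_one hNpos]; linarith
  
  have habs : ∀ (t c ρ : ℝ), t ∈ Set.Ioo (c - ρ) (c + ρ) ↔ |t - c| < ρ := by
    intro t c ρ
    rw [Set.mem_Ioo, abs_lt]
    constructor <;> rintro ⟨a1, a2⟩ <;> constructor <;> linarith
  -- if a subset-sum exceeds b, some grid point is r-close
  have hsum_gt : ∀ (S : Finset ℕ), S ⊆ Finset.Icc 1 N → ∀ t : ℝ,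
      b < ∑ i ∈ S, hat h (x i) t → ∃ i ∈ Finset.Icc 1 N, |t - x i| < r := by
    intro S hS t hgt
    have hpos : (0:ℝ) < ∑ i ∈ S, hat h (x i) t := lt_of_le_of_lt hb0 hgt
    have h0 : ∑ i ∈ S, (0:ℝ) < ∑ i ∈ S, hat h (x i) t := by
      rwa [Finset.sum_const_zero]
    obtain ⟨i, hiS, hipos⟩ := Finset.exists_lt_of_sum_lt h0
    have hdi : |t - x i| < h := by
      have := (hat_gt_iff (b := 0) (x i) t hhpos le_rfl).mp hipos
      rwa [sub_zero, one_mul] at this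
    have hsingle : ∑ j ∈ S, hat h (x j) t = hat h (x i) t := by
      refine Finset.sum_eq_single_of_mem i hiS fun j hjS hji => ?_
      refine hat_zero (x j) t hhpos ?_
      have h1 : |x j - x i| ≤ |x j - t| + |t - x i| := abs_sub_le _ _ _
      have h2 : 2 * h ≤ |x j - x i| := hdist j i hji
      rw [abs_sub_comm (x j) t] at h1
      linarith
    rw [hsingle] at hgt
    exact ⟨i, hS hiS, (hat_gt_iff (x i) t hhpos hb0).mp hgt⟩
  -- a sum avoiding the active index vanishes
  have hzero : ∀ (S : Finset ℕ) (t : ℝ) (i : ℕ), S ⊆ Finset.Icc 1 N → i ∉ S →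
      |t - x i| < h → ∑ j ∈ S, hat h (x j) t = 0 := by
    intro S t i hS hiS hdi
    refine Finset.sum_eq_zero fun j hjS => hat_zero (x j) t hhpos ?_
    have hji : j ≠ i := fun e => hiS (e ▸ hjS)
    have h1 : |x j - x i| ≤ |x j - t| + |t - x i| := abs_sub_le _ _ _
    have h2 : 2 * h ≤ |x j - x i| := hdist j i hji
    rw [abs_sub_comm (x j) t] at h1
    linarith
  have hset : {t : ℝ | t ∈ Set.Icc (0:ℝ) 1 ∧ f₂ t ≠ 0}
      = ⋃ i ∈ Finset.Icc 1 N, (Set.Icc (0:ℝ) 1 ∩ Set.Ioo (x i - r) (x i + r)) := by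
    ext t
    simp only [Set.mem_setOf_eq, Set.mem_iUnion, Set.mem_inter_iff, exists_prop]
    constructor
    · rintro ⟨ht01, hne⟩
      have hor : b < (∑ i ∈ (Finset.Icc 1 N).filter (fun i => (1:ℝ)/2 ≤ x i), hat h (x i) t)
          ∨ b < (∑ i ∈ (Finset.Icc 1 N).filter (fun i => x i < (1:ℝ)/2), hat h (x i) t) := by
        by_contra hc
        push_neg at hc
        apply hne
        rw [hf t]
        simp only [relu]
        rw [max_eq_right (sub_nonpos.2 hc.1), max_eq_right (sub_nonpos.2 hc.2)]
        simp
      rcases hor with hgt | hgt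
      all_goals {
        obtain ⟨i, hi, hlt⟩ := hsum_gt _ (Finset.filter_subset _ _) t hgt
        exact ⟨i, hi, ht01, (habs t (x i) r).2 hlt⟩ }
    · rintro ⟨i, hi, ht01, htIoo⟩
      refine ⟨ht01, ?_⟩
      have hdr : |t - x i| < r := (habs t (x i) r).1 htIoo
      have hdh : |t - x i| < h := lt_of_lt_of_le hdr hrh
      have hhat : b < hat h (x i) t := (hat_gt_iff (x i) t hhpos hb0).mpr hdr
      rcases le_or_gt ((1:ℝ)/2) (x i) with hside | hside
      · have hA : b < ∑ j ∈ (Finset.Icc 1 N).filter (fun j => (1:ℝ)/2 ≤ x j), hat h (x j) t := by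
          refine lt_of_lt_of_le hhat ?_
          exact Finset.single_le_sum (fun j _ => hat_nonneg (x j) t hhpos)
            (Finset.mem_filter.2 ⟨hi, hside⟩)
        have hB : ∑ j ∈ (Finset.Icc 1 N).filter (fun j => x j < (1:ℝ)/2), hat h (x j) t = 0 := by
          refine hzero _ t i (Finset.filter_subset _ _) ?_ hdh
          intro hmem
          exact absurd (Finset.mem_filter.1 hmem).2 (not_lt.2 hside)
        rw [hf t, hB]
        simp only [relu]
        rw [max_eq_left (sub_nonneg.2 hA.le), zero_sub,
          max_eq_right (neg_nonpos.2 hb0), zero_div, sub_zero]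
        exact (div_pos (sub_pos.2 hA) (by linarith)).ne'
      · have hB : b < ∑ j ∈ (Finset.Icc 1 N).filter (fun j => x j < (1:ℝ)/2), hat h (x j) t := by
          refine lt_of_lt_of_le hhat ?_
          exact Finset.single_le_sum (fun j _ => hat_nonneg (x j) t hhpos)
            (Finset.mem_filter.2 ⟨hi, hside⟩)
        have hA : ∑ j ∈ (Finset.Icc 1 N).filter (fun j => (1:ℝ)/2 ≤ x j), hat h (x j) t = 0 := by
          refine hzero _ t i (Finset.filter_subset _ _) ?_ hdh
          intro hmem
          exact absurd (Finset.mem_filter.1 hmem).2 (not_le.2 hside)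
        rw [hf t, hA]
        simp only [relu]
        rw [max_eq_left (sub_nonneg.2 hB.le), zero_sub,
          max_eq_right (neg_nonpos.2 hb0), zero_div, zero_sub]
        exact neg_ne_zero.2 (div_pos (sub_pos.2 hB) (by linarith)).ne'
  
  rw [hset]
  have hmble : ∀ i ∈ Finset.Icc 1 N,
      MeasurableSet (Set.Icc (0:ℝ) 1 ∩ Set.Ioo (x i - r) (x i + r)) :=
    fun i _ => measurableSet_Icc.inter measurableSet_Ioo
  have hdisj : (↑(Finset.Icc 1 N) : Set ℕ).PairwiseDisjoint
      (fun i => Set.Icc (0:ℝ) 1 ∩ Set.Ioo (x i - r) (x i + r)) := by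
    intro i _ j _ hij
    refine Set.disjoint_left.2 fun t hti htj => ?_
    have h1 : |t - x i| < h := lt_of_lt_of_le ((habs t (x i) r).1 hti.2) hrh
    have h2 : |t - x j| < h := lt_of_lt_of_le ((habs t (x j) r).1 htj.2) hrh
    have h3 : 2 * h ≤ |x i - x j| := hdist i j hij
    have h4 : |x i - x j| ≤ |x i - t| + |t - x j| := abs_sub_le _ _ _
    rw [abs_sub_comm (x i) t] at h4
    linarith
  rw [measure_biUnion_finset hdisj hmble]
  have e2h : 2 * h = 1 / ((N:ℝ) - 1) := by rw [hh]; field_simp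
  have hvol : ∀ i ∈ Finset.Icc 1 N,
      volume (Set.Icc (0:ℝ) 1 ∩ Set.Ioo (x i - r) (x i + r))
        = ENNReal.ofReal (2*r - (if i = 1 then r else 0) - (if i = N then r else 0)) := by
    intro i hi
    obtain ⟨hx0, hx1⟩ := hx_mem i hi
    rw [Finset.mem_Icc] at hi
    have key : volume (Set.Icc (0:ℝ) 1 ∩ Set.Ioo (x i - r) (x i + r))
        = ENNReal.ofReal (min 1 (x i + r) - max 0 (x i - r)) := by
      apply le_antisymm
      · rw [← Real.volume_Icc]
        apply measure_mono
        rintro t ⟨⟨ht0, ht1⟩, ht2, ht3⟩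
        exact ⟨max_le ht0 ht2.le, le_min ht1 ht3.le⟩
      · rw [← Real.volume_Ioo]
        apply measure_mono
        rintro t ⟨ht0, ht1⟩
        exact ⟨⟨le_of_lt (lt_of_le_of_lt (le_max_left _ _) ht0),
          le_of_lt (lt_of_lt_of_le ht1 (min_le_left _ _))⟩,
          lt_of_le_of_lt (le_max_right _ _) ht0,
          lt_of_lt_of_le ht1 (min_le_right _ _)⟩
    rw [key]
    congr 1
    rcases eq_or_ne i 1 with rfl | hi1
    · have hx1' : x 1 = 0 := by rw [hx]; simp
      have h1N : (1:ℕ) ≠ N := by omega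
      rw [hx1', if_pos rfl, if_neg h1N]
      rw [zero_add, zero_sub, min_eq_right (by linarith), max_eq_left (by linarith)]
      ring
    · rcases eq_or_ne i N with hiN | hiN
      · have hxN : x i = 1 := by rw [hx, hiN]; field_simp
        rw [hxN, if_neg hi1, if_pos hiN]
        rw [min_eq_left (by linarith), max_eq_right (by linarith)]
        ring
      · have h2i : (2:ℝ) ≤ (i:ℝ) := by
          have : 2 ≤ i := by omega
          exact_mod_cast this
        have hiN' : (i:ℝ) + 1 ≤ (N:ℝ) := by
          have : i + 1 ≤ N := by omega
          exact_mod_cast this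
        have hlo : 2 * h ≤ x i := by
          rw [e2h, hx, div_le_div_iff₀ hNpos hNpos]
          nlinarith
        have hhi : x i ≤ 1 - 2 * h := by
          rw [hx, e2h]
          rw [div_le_iff₀ hNpos]
          have e : (1 - 1/((N:ℝ)-1)) * ((N:ℝ)-1) = (N:ℝ) - 2 := by field_simp; ring
          rw [e]
          linarith
        rw [if_neg hi1, if_neg hiN]
        rw [min_eq_right (by linarith), max_eq_right (by linarith)]
        ring
  rw [Finset.sum_congr rfl hvol]
  have hL : ∀ i ∈ Finset.Icc 1 N,
      (0:ℝ) ≤ 2*r - (if i = 1 then r else 0) - (if i = N then r else 0) := by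
    intro i _
    split <;> split <;> linarith
  rw [← ENNReal.ofReal_sum_of_nonneg hL]
  congr 1
  rw [Finset.sum_sub_distrib, Finset.sum_sub_distrib, Finset.sum_const,
    Finset.sum_ite_eq' (Finset.Icc 1 N) 1 (fun _ => r),
    Finset.sum_ite_eq' (Finset.Icc 1 N) N (fun _ => r)]
  have hm1 : (1:ℕ) ∈ Finset.Icc 1 N := Finset.mem_Icc.2 ⟨le_refl 1, by omega⟩
  have hmN : N ∈ Finset.Icc 1 N := Finset.mem_Icc.2 ⟨by omega, le_refl N⟩
  have hN11 : N + 1 - 1 = N := by omega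
  rw [if_pos hm1, if_pos hmN, Nat.card_Icc, hN11, nsmul_eq_mul, hr, hh]
  field_simp
  ring
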